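/- For every natural number n and every real x > 0, I_{n+1}(x)/I_n(x) ≤ cosh(x) · x / (2(n+1)). -/

import Mathlib

open Real Polynomial Polynomial.Chebyshev Finset

noncomputable def besselI (v x : ℝ) : ℝ :=
  ∑' m : ℕ, (1 / (m.factorial * Real.Gamma ((m : ℝ) + v + 1))) * (x / 2) ^ (2 * (m : ℝ) + v)

/-! For integer order the series of `I_n` has the terms `t_n(m) = (x/2)^(2m+n) / (m! (m+n)!)`,
and `t_{n+1}(m) = x / (2(m+n+1)) · t_n(m) ≤ x / (2(n+1)) · t_n(m)`. Summing gives
`I_{n+1}(x) ≤ x / (2(n+1)) · I_n(x)`, which is even stronger than the claim since `cosh x ≥ 1`. -/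

noncomputable def besselITerm (n : ℕ) (x : ℝ) (m : ℕ) : ℝ :=
  (x / 2) ^ (2 * m + n) / ((m.factorial : ℝ) * (m + n).factorial)

lemma besselI_natCast_eq_tsum (n : ℕ) (x : ℝ) :
    besselI (n : ℝ) x = ∑' m : ℕ, besselITerm n x m := by
  unfold besselI besselITerm
  congr 1; funext m
  have hGamma : (m : ℝ) + n + 1 = ((m + n : ℕ) : ℝ) + 1 := by push_cast; ring
  have hexp : 2 * (m : ℝ) + n = ((2 * m + n : ℕ) : ℝ) := by push_cast; ring
  rw [hGamma, Real.Gamma_nat_eq_factorial, hexp, Real.rpow_natCast, one_div_mul_eq_div]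

lemma besselITerm_nonneg (n : ℕ) {x : ℝ} (hx : 0 ≤ x) (m : ℕ) : 0 ≤ besselITerm n x m := by
  unfold besselITerm; positivity

lemma norm_besselITerm (n : ℕ) (x : ℝ) (m : ℕ) : ‖besselITerm n x m‖ = besselITerm n |x| m := by
  simp only [besselITerm, Real.norm_eq_abs, abs_div, abs_pow, abs_mul, Nat.abs_cast,
    abs_two]

lemma summable_besselITerm (n : ℕ) (x : ℝ) : Summable (besselITerm n x) := by
  refine Summable.of_norm ?_
  simp only [norm_besselITerm]
  refine Summable.of_nonneg_of_le (besselITerm_nonneg n (abs_nonneg x)) (fun m => ?_)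
    ((Real.summable_pow_div_factorial ((|x| / 2) ^ 2)).mul_left ((|x| / 2) ^ n))
  rw [mul_div_assoc', ← pow_mul, mul_comm ((|x| / 2) ^ n), ← pow_add, besselITerm]
  gcongr
  exact le_mul_of_one_le_right (by positivity) (by exact_mod_cast (m + n).factorial_pos)

lemma besselITerm_succ (n : ℕ) (x : ℝ) (m : ℕ) :
    besselITerm (n + 1) x m = x / (2 * ((m : ℝ) + n + 1)) * besselITerm n x m := by
  have hfact : (m + (n + 1)).factorial = (m + n + 1) * (m + n).factorial := by
    rw [← add_assoc, Nat.factorial_succ]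
  unfold besselITerm
  rw [hfact, show 2 * m + (n + 1) = 2 * m + n + 1 by ring, pow_succ]
  push_cast
  field_simp

lemma besselITerm_succ_le (n : ℕ) {x : ℝ} (hx : 0 ≤ x) (m : ℕ) :
    besselITerm (n + 1) x m ≤ x / (2 * ((n : ℝ) + 1)) * besselITerm n x m := by
  rw [besselITerm_succ]
  gcongr
  · exact besselITerm_nonneg n hx m
  · linarith [m.cast_nonneg (α := ℝ)]

lemma besselI_natCast_pos (n : ℕ) {x : ℝ} (hx : 0 < x) : 0 < besselI (n : ℝ) x := by
  rw [besselI_natCast_eq_tsum]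
  refine (summable_besselITerm n x).tsum_pos (besselITerm_nonneg n hx.le) 0 ?_
  unfold besselITerm; positivity

lemma besselI_natCast_succ_le (n : ℕ) {x : ℝ} (hx : 0 ≤ x) :
    besselI ((n : ℝ) + 1) x ≤ x / (2 * ((n : ℝ) + 1)) * besselI (n : ℝ) x := by
  rw [← Nat.cast_add_one n, besselI_natCast_eq_tsum, besselI_natCast_eq_tsum, ← tsum_mul_left]
  push_cast
  exact (summable_besselITerm (n + 1) x).tsum_le_tsum (besselITerm_succ_le n hx)
    ((summable_besselITerm n x).mul_left _)

theorem besselI_ratio_bound (n : ℕ) (x : ℝ) (hx : 0 < x) :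
    besselI ((n : ℝ) + 1) x / besselI (n : ℝ) x ≤ Real.cosh x * x / (2 * ((n : ℝ) + 1)) := by
  have hI := besselI_natCast_pos n hx
  have hc : 0 ≤ x / (2 * ((n : ℝ) + 1)) := by positivity
  rw [div_le_iff₀ hI]
  calc besselI ((n : ℝ) + 1) x ≤ x / (2 * ((n : ℝ) + 1)) * besselI (n : ℝ) x :=
        besselI_natCast_succ_le n hx.le
    _ ≤ Real.cosh x * (x / (2 * ((n : ℝ) + 1)) * besselI (n : ℝ) x) :=
        le_mul_of_one_le_left (mul_nonneg hc hI.le) (Real.one_le_cosh x)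
    _ = Real.cosh x * x / (2 * ((n : ℝ) + 1)) * besselI (n : ℝ) x := by ring
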